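/- arXiv:2206.15188 — 3 statements merged into one kernel-verified Lean document; each statement's English description precedes it below -/
import Mathlib

section
/- Let M be a 3-connected matroid with a path of 3-separations (X,Z,Y) such that Z is a coguts set (i.e., Z ⊆ cl*(X) ∩ cl*(Y) appropriately, meaning each element of Z is in the coguts). Then ⊓(X,Y) ≤ 1; moreover ⊓(X,Y) = 1 if and only if |Z| = 1. -/
open Set Matroid

namespace PaperFormal

variable {α : Type*} {β : Type*}

/-- The (ℤ-valued) rank of a set in a matroid: the supremum of cardinalities of
independent subsets. -/
noncomputable def rk (M : Matroid α) (X : Set α) : ℤ :=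
  (sSup {n : ℕ | ∃ I, I ⊆ X ∧ M.Indep I ∧ I.ncard = n} : ℕ)

/-- Local connectivity `⊓(X,Y) = r(X) + r(Y) − r(X ∪ Y)`. -/
noncomputable def lconn (M : Matroid α) (X Y : Set α) : ℤ :=
  rk M X + rk M Y - rk M (X ∪ Y)

/-- The connectivity function `λ(X) = r(X) + r(E − X) − r(M)`. -/
noncomputable def lam (M : Matroid α) (X : Set α) : ℤ :=
  rk M X + rk M (M.E \ X) - rk M M.E

/-- A circuit: a minimal dependent set. -/
def IsCircuitP (M : Matroid α) (C : Set α) : Prop :=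
  M.Dep C ∧ ∀ D ⊂ C, M.Indep D

/-- A triangle: a 3-element circuit. -/
def IsTriangleP (M : Matroid α) (T : Set α) : Prop :=
  IsCircuitP M T ∧ T.ncard = 3

/-- A triad: a 3-element cocircuit. -/
def IsTriadP (M : Matroid α) (T : Set α) : Prop :=
  IsCircuitP M✶ T ∧ T.ncard = 3

/-- A `k`-separation: a partition `(X, E − X)` with `λ(X) < k` and both sides of
size at least `k`. -/
def IsKSepP (M : Matroid α) (k : ℕ) (X : Set α) : Prop :=
  X ⊆ M.E ∧ lam M X ≤ (k : ℤ) - 1 ∧ (k : ℤ) ≤ X.ncard ∧ (k : ℤ) ≤ (M.E \ X).ncard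

/-- `M` is 3-connected if it has no `k`-separations for `k < 3`. -/
def ThreeConnectedP (M : Matroid α) : Prop :=
  ∀ k : ℕ, k < 3 → ∀ X : Set α, ¬ IsKSepP M k X

/-- Deletion of a set of elements. -/
def PDelete (M : Matroid α) (D : Set α) : Matroid α := M ↾ (M.E \ D)

/-- Contraction of a set of elements. -/
def PContract (M : Matroid α) (C : Set α) : Matroid α := (PDelete M✶ C)✶

/-- `N` is a minor of `M`. -/
def IsMinorP (N M : Matroid α) : Prop :=
  ∃ C D, Disjoint C D ∧ C ⊆ M.E ∧ D ⊆ M.E ∧ N = PDelete (PContract M C) D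

/-- `M` is (isomorphic to) the uniform matroid `U_{a,b}`. -/
def IsUnifP (a b : ℕ) (M : Matroid α) : Prop :=
  M.E.Finite ∧ M.E.ncard = b ∧ ∀ I ⊆ M.E, (M.Indep I ↔ I.ncard ≤ a)

/-- `M` has a minor isomorphic to `U_{a,b}`. -/
def HasUnifMinorP (M : Matroid α) (a b : ℕ) : Prop :=
  ∃ N, IsMinorP N M ∧ IsUnifP a b N

/-- `M` has a minor isomorphic to `U_{2,5}` or `U_{3,5}`. -/
def HasU25U35MinorP (M : Matroid α) : Prop :=
  HasUnifMinorP M 2 5 ∨ HasUnifMinorP M 3 5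

/-- `M` is fragile with respect to the (isomorphism-closed) property `P` of matroids:
`M` has a minor satisfying `P`, and no element is flexible. -/
def FragileFor (M : Matroid α) (P : Matroid α → Prop) : Prop :=
  (∃ N, IsMinorP N M ∧ P N) ∧
    ∀ e ∈ M.E,
      ¬((∃ N, IsMinorP N (PDelete M {e}) ∧ P N) ∧ (∃ N, IsMinorP N (PContract M {e}) ∧ P N))


section RkLemmas
variable {M : Matroid α} {X Y I J : Set α}

lemma rk_bdd (M : Matroid α) [M.Finite] (X : Set α) :
    BddAbove {n : ℕ | ∃ I, I ⊆ X ∧ M.Indep I ∧ I.ncard = n} := by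
  refine ⟨M.E.ncard, ?_⟩
  rintro n ⟨I, hIX, hI, rfl⟩
  exact ncard_le_ncard hI.subset_ground M.ground_finite

lemma indep_ncard_le_rk (M : Matroid α) [M.Finite] (hJX : J ⊆ X) (hJ : M.Indep J) :
    (J.ncard : ℤ) ≤ rk M X := by
  have : J.ncard ≤ sSup {n : ℕ | ∃ I, I ⊆ X ∧ M.Indep I ∧ I.ncard = n} :=
    le_csSup (rk_bdd M X) ⟨J, hJX, hJ, rfl⟩
  simpa [rk] using this

lemma rk_basis' [M.Finite] (hI : M.IsBasis' I X) : rk M X = I.ncard := by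
  have hle : ∀ n ∈ {n : ℕ | ∃ J, J ⊆ X ∧ M.Indep J ∧ J.ncard = n}, n ≤ I.ncard := by
    rintro n ⟨J, hJX, hJ, rfl⟩
    obtain ⟨J', hJ', hJJ'⟩ := hJ.subset_isBasis'_of_subset hJX
    have h1 : J.ncard ≤ J'.ncard :=
      ncard_le_ncard hJJ' (M.set_finite J' hJ'.indep.subset_ground)
    have h2 : J'.ncard = I.ncard :=
      IsBase.ncard_eq_ncard_of_isBase (isBase_restrict_iff'.2 hJ') (isBase_restrict_iff'.2 hI)
    omega
  have : sSup {n : ℕ | ∃ J, J ⊆ X ∧ M.Indep J ∧ J.ncard = n} = I.ncard :=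
    le_antisymm (csSup_le ⟨I.ncard, I, hI.subset, hI.indep, rfl⟩ hle)
      (le_csSup (rk_bdd M X) ⟨I, hI.subset, hI.indep, rfl⟩)
  simp [rk, this]

lemma rk_mono (M : Matroid α) [M.Finite] (h : X ⊆ Y) : rk M X ≤ rk M Y := by
  obtain ⟨I, hI⟩ := M.exists_isBasis' X
  rw [rk_basis' hI]
  exact indep_ncard_le_rk M (hI.subset.trans h) hI.indep

lemma rk_le_ncard (M : Matroid α) [M.Finite] (hX : X.Finite) : rk M X ≤ X.ncard := by
  obtain ⟨I, hI⟩ := M.exists_isBasis' X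
  rw [rk_basis' hI]
  exact_mod_cast ncard_le_ncard hI.subset hX

lemma rk_union_le (M : Matroid α) [M.Finite] (X Y : Set α) :
    rk M (X ∪ Y) ≤ rk M X + rk M Y := by
  obtain ⟨I, hI⟩ := M.exists_isBasis' (X ∪ Y)
  rw [rk_basis' hI]
  have h1 : ((I ∩ X).ncard : ℤ) ≤ rk M X :=
    indep_ncard_le_rk M inter_subset_right (hI.indep.subset inter_subset_left)
  have h1' : ((I ∩ Y).ncard : ℤ) ≤ rk M Y :=
    indep_ncard_le_rk M inter_subset_right (hI.indep.subset inter_subset_left)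
  have h2 : I.ncard ≤ (I ∩ X).ncard + (I ∩ Y).ncard := by
    have heq : I = (I ∩ X) ∪ (I ∩ Y) := by
      rw [← inter_union_distrib_left, inter_eq_self_of_subset_left hI.subset]
    calc I.ncard = ((I ∩ X) ∪ (I ∩ Y)).ncard := by rw [← heq]
      _ ≤ _ := ncard_union_le _ _
  omega
end RkLemmas


/-- If `(X,Z,Y)` is a path of 3-separations in a 3-connected matroid `M`
with `Z` a coguts set, then `⊓(X,Y) ≤ 1`, with equality iff `|Z| = 1`. -/
theorem stmt3 (M : Matroid α) [M.Finite] (hM : ThreeConnectedP M)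
    (X Z Y : Set α) (hXne : X.Nonempty) (hZne : Z.Nonempty) (hYne : Y.Nonempty)
    (hXZ : Disjoint X Z) (hXY : Disjoint X Y) (hZY : Disjoint Z Y)
    (hU : X ∪ Z ∪ Y = M.E)
    (hsep1 : lam M X = 2) (hsep2 : lam M (X ∪ Z) = 2)
    (hcoguts1 : rk M (X ∪ Z) = rk M X + Z.ncard)
    (hcoguts2 : rk M (Y ∪ Z) = rk M Y + Z.ncard) :
    lconn M X Y ≤ 1 ∧ (lconn M X Y = 1 ↔ Z.ncard = 1) := by
  have hE : M.E.Finite := M.ground_finite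
  have hXE : X ⊆ M.E := fun x hx => hU ▸ Or.inl (Or.inl hx)
  have hZE : Z ⊆ M.E := fun x hx => hU ▸ Or.inl (Or.inr hx)
  have hYE : Y ⊆ M.E := fun x hx => hU ▸ Or.inr hx
  have hXfin := hE.subset hXE
  have hZfin := hE.subset hZE
  have hYfin := hE.subset hYE
  have dXZ := Set.disjoint_left.mp hXZ
  have dXY := Set.disjoint_left.mp hXY
  have dZY := Set.disjoint_left.mp hZY
  set n : ℤ := (Z.ncard : ℤ) with hn
  have hn1 : 1 ≤ n := by
    have := (ncard_pos hZfin).2 hZne; omega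
  -- set identities
  have hEX : M.E \ X = Y ∪ Z := by
    rw [← hU]; ext x
    simp only [mem_diff, mem_union]
    constructor
    · rintro ⟨(h | h) | h, hx⟩ <;> tauto
    · rintro (h | h)
      · exact ⟨Or.inr h, fun hx => dXY hx h⟩
      · exact ⟨Or.inl (Or.inr h), fun hx => dXZ hx h⟩
  have hEZ : M.E \ Z = X ∪ Y := by
    rw [← hU]; ext x
    simp only [mem_diff, mem_union]
    constructor
    · rintro ⟨(h | h) | h, hx⟩ <;> tauto
    · rintro (h | h)
      · exact ⟨Or.inl (Or.inl h), fun hx => dXZ h hx⟩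
      · exact ⟨Or.inr h, fun hx => dZY hx h⟩
  -- key rank equation
  have key : rk M X + rk M Y + n = rk M M.E + 2 := by
    have h := hsep1
    rw [lam, hEX, union_comm Y Z, union_comm Z Y, hcoguts2] at h
    linarith
  -- pick z in Z; rk (E \ {z}) ≥ rk E from 3-connectivity (no 1-separations)
  obtain ⟨z, hz⟩ := hZne
  have hzE : ({z} : Set α) ⊆ M.E := singleton_subset_iff.2 (hZE hz)
  have hXsub : X ⊆ M.E \ {z} := by
    intro x hx
    exact ⟨hXE hx, by rintro rfl; exact dXZ hx hz⟩
  have hlamz : 1 ≤ lam M {z} := by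
    by_contra h
    push_neg at h
    refine hM 1 (by norm_num) {z} ⟨hzE, by omega, by simp, ?_⟩
    have h1 : 1 ≤ X.ncard := (ncard_pos hXfin).2 hXne
    have h2 : X.ncard ≤ (M.E \ {z}).ncard := ncard_le_ncard hXsub hE.diff
    push_cast; omega
  have hrkz : rk M ({z} : Set α) ≤ 1 := by
    simpa using rk_le_ncard M (finite_singleton z)
  have hrEz : rk M M.E ≤ rk M (M.E \ {z}) := by
    rw [lam] at hlamz; linarith
  have hsplit : M.E \ {z} = (X ∪ Y) ∪ (Z \ {z}) := by
    rw [← hU]; ext x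
    simp only [mem_diff, mem_union, mem_singleton_iff]
    constructor
    · rintro ⟨(h | h) | h, hx⟩ <;> tauto
    · rintro ((h | h) | ⟨h, hx⟩)
      · exact ⟨Or.inl (Or.inl h), by rintro rfl; exact dXZ h hz⟩
      · exact ⟨Or.inr h, by rintro rfl; exact dZY hz h⟩
      · exact ⟨Or.inl (Or.inr h), hx⟩
  have hZz : ((Z \ {z}).ncard : ℤ) = n - 1 := by
    rw [ncard_diff_singleton_of_mem hz]; omega
  have hA : rk M M.E ≤ rk M (X ∪ Y) + (n - 1) := by
    have h1 := rk_union_le M (X ∪ Y) (Z \ {z})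
    have h2 : rk M (Z \ {z}) ≤ ((Z \ {z}).ncard : ℤ) :=
      rk_le_ncard M hZfin.diff
    rw [← hsplit] at h1
    rw [hZz] at h2
    linarith
  have hpart1 : lconn M X Y ≤ 1 := by
    rw [lconn]
    have := rk_mono M (show X ∪ Y ⊆ M.E from union_subset hXE hYE)
    linarith
  refine ⟨hpart1, ?_, ?_⟩
  · -- lconn = 1 → n = 1
    intro hl
    by_contra hne
    have hn2 : 2 ≤ n := by
      have h' : (Z.ncard : ℤ) ≠ 1 := by exact_mod_cast hne
      rw [hn]; omega
    have hrXY : rk M (X ∪ Y) = rk M M.E + 1 - n := by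
      rw [lconn] at hl; linarith
    refine hM 2 (by norm_num) Z ⟨hZE, ?_, ?_, ?_⟩
    · rw [lam, hEZ, hrXY]
      have : rk M Z ≤ n := rk_le_ncard M hZfin
      push_cast; linarith
    · omega
    · rw [hEZ, ncard_union_eq hXY hXfin hYfin]
      have h1 := (ncard_pos hXfin).2 hXne
      have h2 := (ncard_pos hYfin).2 hYne
      push_cast; omega
  · -- n = 1 → lconn = 1
    intro h1
    have hZeq : Z = {z} := by
      obtain ⟨a, ha⟩ := ncard_eq_one.1 h1
      rw [ha] at hz ⊢
      rw [hz]
    have hXY' : X ∪ Y = M.E \ {z} := by rw [← hZeq, hEZ]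
    have hle : rk M (X ∪ Y) ≤ rk M M.E :=
      rk_mono M (union_subset hXE hYE)
    have hge : rk M M.E ≤ rk M (X ∪ Y) := by rw [hXY']; exact hrEz
    rw [lconn]
    have hone : n = 1 := by rw [hn]; exact_mod_cast h1
    linarith

end PaperFormal
end

section
/- Let M be a 3-connected matroid, let (X,e,Y) be a partition of E(M) such that X is exactly 3-separating. Then X ∪ {e} is 3-separating if and only if e ∈ cl(X) or e ∈ cl*(X); and X ∪ {e} is exactly 3-separating if and only if either e ∈ cl(X) ∩ cl(Y) or e ∈ cl*(X) ∩ cl*(Y). -/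
open Set Matroid

namespace PaperFormal

variable {α : Type*} {β : Type*}

section Aux

variable {M : Matroid α} {I X Y : Set α} {e : α}

instance dualFin (M : Matroid α) [M.Finite] : M✶.Finite := ⟨M.ground_finite⟩

lemma rk_eq_ncard [M.Finite] (hI : M.IsBasis' I X) : rk M X = (I.ncard : ℤ) := by
  have hmem : I.ncard ∈ {n : ℕ | ∃ J, J ⊆ X ∧ M.Indep J ∧ J.ncard = n} :=
    ⟨I, hI.subset, hI.indep, rfl⟩
  have hub : ∀ n ∈ {n : ℕ | ∃ J, J ⊆ X ∧ M.Indep J ∧ J.ncard = n}, n ≤ I.ncard := by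
    rintro n ⟨J, hJX, hJ, rfl⟩
    obtain ⟨I', hI', hJI'⟩ := hJ.subset_isBasis'_of_subset hJX
    have h1 : I'.ncard = I.ncard := by
      rw [Set.ncard_def, hI'.encard_eq_encard hI, ← Set.ncard_def]
    exact h1 ▸ Set.ncard_le_ncard hJI' hI'.indep.finite
  have h : sSup {n : ℕ | ∃ J, J ⊆ X ∧ M.Indep J ∧ J.ncard = n} = I.ncard :=
    le_antisymm (csSup_le ⟨_, hmem⟩ hub) (le_csSup ⟨I.ncard, hub⟩ hmem)
  rw [rk, h]

lemma rk_insert_mem [M.Finite] (hX : X ⊆ M.E) (he : e ∈ M.closure X) :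
    rk M (insert e X) = rk M X := by
  obtain ⟨I, hI⟩ := M.exists_isBasis X hX
  have heE : e ∈ M.E := M.closure_subset_ground X he
  have h2 : M.IsBasis I (insert e X) :=
    hI.isBasis_of_closure_eq_closure (hI.subset.trans (subset_insert _ _))
      (closure_insert_eq_of_mem_closure he).symm (insert_subset heE hX)
  rw [rk_eq_ncard h2.isBasis', rk_eq_ncard hI.isBasis']

lemma rk_insert_not_mem [M.Finite] (hX : X ⊆ M.E) (heE : e ∈ M.E)
    (he : e ∉ M.closure X) : rk M (insert e X) = rk M X + 1 := by
  obtain ⟨I, hI⟩ := M.exists_isBasis X hX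
  have hecl : e ∉ M.closure I := by rwa [hI.closure_eq_closure]
  have heI : e ∉ I := fun h => hecl (M.subset_closure I hI.indep.subset_ground h)
  have hind : M.Indep (insert e I) := by
    rw [hI.indep.insert_indep_iff_of_notMem heI]; exact ⟨heE, hecl⟩
  rw [rk_eq_ncard (hI.insert_isBasis_insert hind).isBasis', rk_eq_ncard hI.isBasis',
    Set.ncard_insert_of_notMem heI hI.indep.finite]
  push_cast; ring

lemma mem_closure_iff_rk [M.Finite] (hX : X ⊆ M.E) (heE : e ∈ M.E) :
    e ∈ M.closure X ↔ rk M (insert e X) = rk M X := by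
  by_cases he : e ∈ M.closure X
  · simp [he, rk_insert_mem hX he]
  · simp only [he, false_iff]
    rw [rk_insert_not_mem hX heE he]; omega

lemma rk_dual_eq [M.Finite] (hX : X ⊆ M.E) :
    rk M✶ X = (X.ncard : ℤ) + rk M (M.E \ X) - rk M M.E := by
  obtain ⟨I, hI⟩ := M.exists_isBasis (M.E \ X) diff_subset
  obtain ⟨B, hB, hIB⟩ := hI.indep.exists_isBase_superset
  have hBint : B ∩ (M.E \ X) = I :=
    (hI.eq_of_subset_indep (hB.indep.inter_right _)
      (subset_inter hIB hI.subset) inter_subset_right).symm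
  have hIbasis : M.IsBasis (B ∩ (M.E \ X)) (M.E \ X) := hBint ▸ hI
  have hdb := hB.compl_inter_isBasis_of_inter_isBasis hIbasis
  rw [diff_diff_cancel_left hX] at hdb
  have e1 : (M.E \ B) ∩ X = X \ B := by
    ext x
    simp only [mem_inter_iff, mem_diff]
    exact ⟨fun ⟨⟨_, hxB⟩, hxX⟩ => ⟨hxX, hxB⟩, fun ⟨hxX, hxB⟩ => ⟨⟨hX hxX, hxB⟩, hxX⟩⟩
  have e2 : B ∩ (M.E \ X) = B \ X := by
    ext x
    simp only [mem_inter_iff, mem_diff]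
    exact ⟨fun ⟨hxB, ⟨_, hxX⟩⟩ => ⟨hxB, hxX⟩,
      fun ⟨hxB, hxX⟩ => ⟨hxB, ⟨hB.subset_ground hxB, hxX⟩⟩⟩
  have h1 := Set.ncard_inter_add_ncard_diff_eq_ncard X B (M.ground_finite.subset hX)
  have h2 := Set.ncard_inter_add_ncard_diff_eq_ncard B X
    (M.ground_finite.subset hB.subset_ground)
  rw [rk_eq_ncard hdb.isBasis', e1, ← hBint, rk_eq_ncard hIbasis.isBasis',
    rk_eq_ncard hB.isBasis_ground.isBasis', e2, inter_comm X B] at *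
  omega

end Aux

/-- Let `(X, {e}, Y)` be a partition of `E(M)` with `X` exactly
3-separating, in a 3-connected matroid `M`. Then `X ∪ {e}` is 3-separating iff
`e ∈ cl(X)` or `e ∈ cl*(X)`, and `X ∪ {e}` is exactly 3-separating iff
`e ∈ cl(X) ∩ cl(Y)` or `e ∈ cl*(X) ∩ cl*(Y)`. -/
theorem stmt7 (M : Matroid α) [M.Finite] (hM : ThreeConnectedP M)
    (X Y : Set α) (e : α)
    (heX : e ∉ X) (heY : e ∉ Y) (hXY : Disjoint X Y)
    (hU : X ∪ {e} ∪ Y = M.E)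
    (hX : lam M X = 2) :
    (lam M (X ∪ {e}) ≤ 2 ↔ (e ∈ M.closure X ∨ e ∈ M✶.closure X)) ∧
    (lam M (X ∪ {e}) = 2 ↔
      (e ∈ M.closure X ∩ M.closure Y ∨ e ∈ M✶.closure X ∩ M✶.closure Y)) := by
  have heE : e ∈ M.E := by
    rw [← hU]; exact mem_union_left _ (mem_union_right _ rfl)
  have hXE : X ⊆ M.E := fun x hx => by
    rw [← hU]; exact mem_union_left _ (mem_union_left _ hx)
  have hYE : Y ⊆ M.E := fun x hx => by rw [← hU]; exact mem_union_right _ hx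
  have hd : ∀ ⦃x⦄, x ∈ X → x ∉ Y := Set.disjoint_left.mp hXY
  have A1 : M.E \ X = insert e Y := by
    ext x
    rw [← hU]
    simp only [mem_diff, mem_union, mem_singleton_iff, mem_insert_iff]
    constructor
    · rintro ⟨(h | h) | h, hx⟩
      · exact absurd h hx
      · exact Or.inl h
      · exact Or.inr h
    · rintro (rfl | h)
      · exact ⟨Or.inl (Or.inr rfl), heX⟩
      · exact ⟨Or.inr h, fun hx => hd hx h⟩
  have A3 : M.E \ insert e X = Y := by
    ext x
    rw [← hU]
    simp only [mem_diff, mem_union, mem_singleton_iff, mem_insert_iff]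
    constructor
    · rintro ⟨(h | h) | h, hx⟩
      · exact absurd (Or.inr h) hx
      · exact absurd (Or.inl h) hx
      · exact h
    · intro h
      exact ⟨Or.inr h, fun hx => hx.elim (fun hh => heY (hh ▸ h)) (fun hh => hd hh h)⟩
  have A4 : M.E \ Y = insert e X := by
    ext x
    rw [← hU]
    simp only [mem_diff, mem_union, mem_singleton_iff, mem_insert_iff]
    constructor
    · rintro ⟨(h | h) | h, hx⟩
      · exact Or.inr h
      · exact Or.inl h
      · exact absurd h hx
    · rintro (rfl | h)
      · exact ⟨Or.inl (Or.inr rfl), heY⟩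
      · exact ⟨Or.inl (Or.inl h), hd h⟩
  have A5 : M.E \ insert e Y = X := by
    ext x
    rw [← hU]
    simp only [mem_diff, mem_union, mem_singleton_iff, mem_insert_iff]
    constructor
    · rintro ⟨(h | h) | h, hx⟩
      · exact h
      · exact absurd (Or.inl h) hx
      · exact absurd (Or.inr h) hx
    · intro h
      exact ⟨Or.inl (Or.inl h), fun hx => hx.elim (fun hh => heX (hh ▸ h)) (fun hh => hd h hh)⟩
  have hXeE : insert e X ⊆ M.E := insert_subset heE hXE
  have hYeE : insert e Y ⊆ M.E := insert_subset heE hYE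
  have hncX : ((insert e X).ncard : ℤ) = (X.ncard : ℤ) + 1 := by
    rw [Set.ncard_insert_of_notMem heX (M.ground_finite.subset hXE)]; push_cast; ring
  have hncY : ((insert e Y).ncard : ℤ) = (Y.ncard : ℤ) + 1 := by
    rw [Set.ncard_insert_of_notMem heY (M.ground_finite.subset hYE)]; push_cast; ring
  -- dual closure characterizations
  have hstarX : e ∈ M✶.closure X ↔ e ∉ M.closure Y := by
    rw [mem_closure_iff_rk (M := M✶) hXE heE, rk_dual_eq hXeE, rk_dual_eq hXE, A3, A1, hncX]
    by_cases hcy : e ∈ M.closure Y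
    · rw [rk_insert_mem hYE hcy]
      simp [hcy] <;> omega
    · rw [rk_insert_not_mem hYE heE hcy]
      simp [hcy] <;> omega
  have hstarY : e ∈ M✶.closure Y ↔ e ∉ M.closure X := by
    rw [mem_closure_iff_rk (M := M✶) hYE heE, rk_dual_eq hYeE, rk_dual_eq hYE, A5, A4, hncY]
    by_cases hcx : e ∈ M.closure X
    · rw [rk_insert_mem hXE hcx]
      simp [hcx] <;> omega
    · rw [rk_insert_not_mem hXE heE hcx]
      simp [hcx] <;> omega
  have hlam : lam M (X ∪ {e}) = rk M (insert e X) + rk M Y - rk M M.E := by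
    rw [lam, union_singleton, A3]
  rw [lam, A1] at hX
  by_cases hcx : e ∈ M.closure X <;> by_cases hcy : e ∈ M.closure Y
  · rw [rk_insert_mem hYE hcy] at hX
    rw [hlam, rk_insert_mem hXE hcx]
    simp [hstarX, hstarY, hcx, hcy]
    omega
  · rw [rk_insert_not_mem hYE heE hcy] at hX
    rw [hlam, rk_insert_mem hXE hcx]
    simp [hstarX, hstarY, hcx, hcy]
    omega
  · rw [rk_insert_mem hYE hcy] at hX
    rw [hlam, rk_insert_not_mem hXE heE hcx]
    simp [hstarX, hstarY, hcx, hcy]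
    omega
  · rw [rk_insert_not_mem hYE heE hcy] at hX
    rw [hlam, rk_insert_not_mem hXE heE hcx]
    simp [hstarX, hstarY, hcx, hcy]
    omega

end PaperFormal
end

section
/- The partial fields H₅ (Hydra-5) and U₃ (3-regular) are isomorphic; in particular, a matroid is representable over U₃ if and only if it is representable over H₅. -/
open Set Matroid

namespace PaperFormal

variable {α : Type*} {β : Type*}

universe u

/-- The field `ℚ(α₁,α₂,α₃)` of rational functions in three indeterminates over `ℚ`. -/
abbrev KField : Type := FractionRing (MvPolynomial (Fin 3) ℚ)

/-- The transcendental generators `α₁, α₂, α₃` of `KField`. -/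
noncomputable def tv (i : Fin 3) : KField :=
  algebraMap (MvPolynomial (Fin 3) ℚ) KField (MvPolynomial.X i)

/-- The subgroup of units of `KField` generated by a set of field elements. -/
noncomputable def pfGroup (S : Set KField) : Subgroup KFieldˣ :=
  Subgroup.closure {u : KFieldˣ | (u : KField) ∈ S}

/-- The set `G ∪ {0}` of elements of the partial field with group `G`. -/
def PFMembers (G : Subgroup KFieldˣ) : Set KField :=
  insert 0 {x | ∃ u : KFieldˣ, u ∈ G ∧ (u : KField) = x}

/-- A homomorphism of partial fields `(KField, G) → (KField, G')`: a function defined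
on `G ∪ {0}`, mapping into `G' ∪ {0}`, preserving `1`, products, and defined sums. -/
structure PFHomP (G G' : Subgroup KFieldˣ) where
  toFun : KField → KField
  mem_maps : ∀ x ∈ PFMembers G, toFun x ∈ PFMembers G'
  map_one : toFun 1 = 1
  map_mul : ∀ p ∈ PFMembers G, ∀ q ∈ PFMembers G, toFun (p * q) = toFun p * toFun q
  map_add : ∀ p ∈ PFMembers G, ∀ q ∈ PFMembers G,
    p + q ∈ PFMembers G → toFun (p + q) = toFun p + toFun q

/-- Two partial fields are isomorphic: there are mutually inverse homomorphisms. -/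
def PFIsoP (G G' : Subgroup KFieldˣ) : Prop :=
  ∃ (φ : PFHomP G G') (ψ : PFHomP G' G),
    (∀ x ∈ PFMembers G, ψ.toFun (φ.toFun x) = x) ∧
      (∀ y ∈ PFMembers G', φ.toFun (ψ.toFun y) = y)

/-- The `3`-regular partial field `U₃`, as a subgroup of units of `ℚ(α₁,α₂,α₃)`. -/
noncomputable def U3Group : Subgroup KFieldˣ :=
  pfGroup {-1, tv 0, tv 1, tv 2, tv 0 - 1, tv 1 - 1, tv 2 - 1,
    tv 0 - tv 1, tv 0 - tv 2, tv 1 - tv 2}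

/-- The Hydra-5 partial field `H₅`, as a subgroup of units of `ℚ(α,β,γ)`
(with `α = tv 0`, `β = tv 1`, `γ = tv 2`). -/
noncomputable def H5Group : Subgroup KFieldˣ :=
  pfGroup {-1, tv 0, tv 1, tv 2, 1 - tv 0, 1 - tv 1, 1 - tv 2,
    tv 0 - tv 2, tv 2 - tv 0 * tv 1, 1 - tv 2 - (1 - tv 0) * tv 1}

/-- The `2`-regular partial field `U₂`, as a subgroup of units of `ℚ(α₁,α₂)`. -/
noncomputable def U2Group : Subgroup KFieldˣ :=
  pfGroup {-1, tv 0, tv 1, 1 - tv 0, 1 - tv 1, tv 0 - tv 1}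

/-- Every square subdeterminant of the `X × Y` matrix `A` lies in `S`. -/
def SubdetsIn [DecidableEq α] (A : α → α → KField) (S : Set KField)
    (X Y : Finset α) : Prop :=
  ∀ P Q : Finset α, P ⊆ X → Q ⊆ Y →
    ∀ (n : ℕ) (ep : {x // x ∈ P} ≃ Fin n) (eq : {x // x ∈ Q} ≃ Fin n),
      (Matrix.of fun i j => A (ep.symm i).1 (eq.symm j).1).det ∈ S

/-- The square submatrix of `A` with rows `P` and columns `Q` has nonzero determinant. -/
def SubdetNonzero [DecidableEq α] (A : α → α → KField) (P Q : Finset α) : Prop :=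
  ∀ (n : ℕ) (ep : {x // x ∈ P} ≃ Fin n) (eq : {x // x ∈ Q} ≃ Fin n),
    (Matrix.of fun i j => A (ep.symm i).1 (eq.symm j).1).det ≠ 0

/-- `M` is representable over the partial field with group `G`: there is an `X × Y`
`P`-matrix `A` (all square subdeterminants in `G ∪ {0}`), with `X ∪ Y = E(M)` and
`X ∩ Y = ∅`, such that the bases of `M` are exactly `X` together with the sets
`X Δ Z` for which `|X ∩ Z| = |Y ∩ Z|` and the corresponding subdeterminant of `A`
is nonzero. -/
def RepOver [DecidableEq α] (M : Matroid α) (G : Subgroup KFieldˣ) : Prop :=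
  ∃ (X Y : Finset α) (A : α → α → KField),
    Disjoint (X : Set α) (Y : Set α) ∧ (X : Set α) ∪ (Y : Set α) = M.E ∧
      SubdetsIn A (PFMembers G) X Y ∧
      ∀ B : Set α, M.IsBase B ↔
        (B = (X : Set α) ∨
          ∃ Z : Finset α, (Z : Set α) ⊆ M.E ∧ (X ∩ Z).card = (Y ∩ Z).card ∧
            B = symmDiff (X : Set α) (Z : Set α) ∧ SubdetNonzero A (X ∩ Z) (Y ∩ Z))


section Stmt15Aux

open MvPolynomial

set_option maxHeartbeats 1000000
set_option synthInstance.maxHeartbeats 400000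

noncomputable section

lemma tv_indep : AlgebraicIndependent ℚ tv :=
  (MvPolynomial.algebraicIndependent_X (Fin 3) ℚ).map'
    (f := IsScalarTower.toAlgHom ℚ (MvPolynomial (Fin 3) ℚ) KField)
    (IsFractionRing.injective _ _)

lemma aeval_tv_ne (P : MvPolynomial (Fin 3) ℚ) (v : Fin 3 → ℚ)
    (h : MvPolynomial.eval v P ≠ 0) : (MvPolynomial.aeval tv) P ≠ 0 := by
  intro h0
  have hP : P = 0 := tv_indep.eq_zero_of_aeval_eq_zero P h0
  rw [hP, map_zero] at h
  exact h rfl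

lemma ne_a : tv 0 ≠ 0 := by
  have := aeval_tv_ne (X 0) ![1,1,1] (by simp); simpa using this
lemma ne_b : tv 1 ≠ 0 := by
  have := aeval_tv_ne (X 1) ![1,1,1] (by simp); simpa using this
lemma ne_c : tv 2 ≠ 0 := by
  have := aeval_tv_ne (X 2) ![1,1,1] (by simp); simpa using this
lemma ne_ab : tv 0 - tv 1 ≠ 0 := by
  have := aeval_tv_ne (X 0 - X 1) ![1,0,0] (by simp); simpa using this
lemma ne_ac : tv 0 - tv 2 ≠ 0 := by
  have := aeval_tv_ne (X 0 - X 2) ![1,0,0] (by simp); simpa using this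
lemma ne_bc : tv 1 - tv 2 ≠ 0 := by
  have := aeval_tv_ne (X 1 - X 2) ![0,1,0] (by simp); simpa using this
lemma ne_ca : -tv 0 + tv 2 ≠ 0 := by
  have := aeval_tv_ne (-X 0 + X 2) ![1,0,0] (by simp); simpa using this
lemma ne_a1 : tv 0 - 1 ≠ 0 := by
  have := aeval_tv_ne (X 0 - 1) ![2,0,0] (by norm_num); simpa using this
lemma ne_b1' : tv 1 - 1 ≠ 0 := by
  have := aeval_tv_ne (X 1 - 1) ![0,2,0] (by norm_num); simpa using this
lemma ne_c1 : tv 2 - 1 ≠ 0 := by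
  have := aeval_tv_ne (X 2 - 1) ![0,0,2] (by simp; norm_num); simpa using this
lemma ne_1a : (1 : KField) - tv 0 ≠ 0 := by
  have := aeval_tv_ne (1 - X 0) ![0,0,0] (by simp); simpa using this
lemma ne_b1 : (1 : KField) - tv 1 ≠ 0 := by
  have := aeval_tv_ne (1 - X 1) ![0,0,0] (by simp); simpa using this
lemma ne_1c : (1 : KField) - tv 2 ≠ 0 := by
  have := aeval_tv_ne (1 - X 2) ![0,0,0] (by simp); simpa using this
lemma ne_cab : tv 2 - tv 0 * tv 1 ≠ 0 := by
  have := aeval_tv_ne (X 2 - X 0 * X 1) ![0,0,1] (by simp); simpa using this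
lemma ne_g10 : (1 : KField) - tv 2 - (1 - tv 0) * tv 1 ≠ 0 := by
  have := aeval_tv_ne (1 - X 2 - (1 - X 0) * X 1) ![0,0,0] (by simp); simpa using this

/-- Möbius transcendence lemma. -/
lemma mobius_trans {S : Type} [CommRing S] [IsDomain S] [Algebra S KField]
    {b : KField} (hb : Transcendental S b) (e f x0 : S)
    (hef : algebraMap S KField e * algebraMap S KField x0 + algebraMap S KField f ≠ 0)
    (hx0b : algebraMap S KField x0 - b ≠ 0) :
    Transcendental S ((algebraMap S KField e * b + algebraMap S KField f) /
      (algebraMap S KField x0 - b)) := by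
  set am := algebraMap S KField with ham
  set z := (am e * b + am f) / (am x0 - b) with hz
  rintro ⟨p, hp0, hpz⟩
  set n := p.natDegree with hn
  set q : Polynomial S := ∑ k ∈ Finset.range (n+1),
      Polynomial.C (p.coeff k) * (Polynomial.C e * Polynomial.X + Polynomial.C f) ^ k *
        (Polynomial.C x0 - Polynomial.X) ^ (n - k) with hq
  apply hb
  refine ⟨q, ?_, ?_⟩
  · intro hq0
    have hev : Polynomial.eval x0 q = p.coeff n * (e * x0 + f) ^ n := by
      rw [hq]
      rw [Polynomial.eval_finset_sum]
      rw [Finset.sum_eq_single n]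
      · simp
      · intro k hk hkn
        have hklt : k < n := lt_of_le_of_ne (Nat.lt_succ_iff.mp (Finset.mem_range.mp hk)) hkn
        simp [Nat.sub_ne_zero_of_lt hklt, zero_pow, Nat.sub_ne_zero_of_lt hklt]
      · intro h; exact absurd (Finset.self_mem_range_succ n) h
    rw [hq0] at hev
    simp only [Polynomial.eval_zero] at hev
    have h1 : p.coeff n ≠ 0 := Polynomial.leadingCoeff_ne_zero.mpr hp0
    have h2 : (e * x0 + f) ≠ 0 := by
      intro h
      apply hef
      rw [← map_mul, ← map_add]
      rw [h, map_zero]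
    exact (mul_ne_zero h1 (pow_ne_zero _ h2)) hev.symm
  · have h1 : ∑ k ∈ Finset.range (n+1), am (p.coeff k) * z ^ k = 0 := by
      have hthis := hpz
      rw [Polynomial.aeval_eq_sum_range] at hthis
      simpa [Algebra.smul_def] using hthis
    have h3 : (Polynomial.aeval b) q =
        ∑ k ∈ Finset.range (n+1),
          am (p.coeff k) * ((am e * b + am f) ^ k * (am x0 - b) ^ (n-k)) := by
      rw [hq, map_sum]
      refine Finset.sum_congr rfl fun k _ => ?_
      simp [Polynomial.aeval_C, mul_assoc, ham]
    have h4 : ∀ k ∈ Finset.range (n+1),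
        am (p.coeff k) * ((am e * b + am f) ^ k * (am x0 - b) ^ (n-k)) =
          (am (p.coeff k) * z ^ k) * (am x0 - b) ^ n := by
      intro k hk
      have hkn : k ≤ n := Nat.lt_succ_iff.mp (Finset.mem_range.mp hk)
      have hzk : z ^ k * (am x0 - b) ^ k = (am e * b + am f) ^ k := by
        rw [hz, div_pow, div_mul_cancel₀]
        exact pow_ne_zero _ hx0b
      have hsplit : (am x0 - b) ^ n = (am x0 - b) ^ k * (am x0 - b) ^ (n-k) := by
        rw [← pow_add, Nat.add_sub_cancel' hkn]
      rw [hsplit, ← hzk]; ring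
    rw [h3, Finset.sum_congr rfl h4, ← Finset.sum_mul, h1, zero_mul]

def gac : Fin 2 → Fin 3 := ![0, 2]

lemma pair_indep : AlgebraicIndependent ℚ (tv ∘ gac) :=
  tv_indep.comp gac (by decide)

lemma tv1_trans : Transcendental (Algebra.adjoin ℚ (Set.range (tv ∘ gac))) (tv 1) := by
  rw [← pair_indep.option_iff_transcendental (tv 1)]
  have h : (tv ∘ (fun o : Option (Fin 2) => o.elim 1 gac)) =
      (fun o : Option (Fin 2) => o.elim (tv 1) (tv ∘ gac)) := by
    funext o; cases o <;> rfl
  rw [← h]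
  exact tv_indep.comp _ (by decide)

abbrev Sac := Algebra.adjoin ℚ (Set.range (tv ∘ gac))

lemma mem_a : tv 0 ∈ Sac := Algebra.subset_adjoin ⟨0, rfl⟩
lemma mem_c : tv 2 ∈ Sac := Algebra.subset_adjoin ⟨1, rfl⟩

lemma am_Sac (x : Sac) : algebraMap Sac KField x = (x : KField) := rfl

def yv : KField := (tv 2 - tv 1) / (tv 0 - tv 1)
def zv : KField := (tv 2 - tv 0 * tv 1) / (1 - tv 1)

lemma yv_trans : Transcendental Sac yv := by
  have h := mobius_trans tv1_trans (-1) ⟨tv 2, mem_c⟩ ⟨tv 0, mem_a⟩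
    (by rw [map_neg, map_one, am_Sac, am_Sac]; intro h
        exact ne_ca (by linear_combination h))
    (by rw [am_Sac]; exact ne_ab)
  have he : (algebraMap Sac KField (-1) * tv 1 + algebraMap Sac KField ⟨tv 2, mem_c⟩) /
      (algebraMap Sac KField ⟨tv 0, mem_a⟩ - tv 1) = yv := by
    rw [map_neg, map_one, am_Sac, am_Sac, yv]; ring_nf
  rwa [he] at h

lemma zv_trans : Transcendental Sac zv := by
  have h := mobius_trans tv1_trans (-⟨tv 0, mem_a⟩) ⟨tv 2, mem_c⟩ 1
    (by rw [map_neg, map_one, am_Sac, am_Sac]; intro h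
        exact ne_ca (by linear_combination h))
    (by rw [map_one]; exact ne_b1)
  have he : (algebraMap Sac KField (-⟨tv 0, mem_a⟩) * tv 1 + algebraMap Sac KField ⟨tv 2, mem_c⟩) /
      (algebraMap Sac KField 1 - tv 1) = zv := by
    rw [map_neg, map_one, am_Sac, am_Sac, zv]; ring_nf
  rwa [he] at h

def e3 : Option (Fin 2) ≃ Fin 3 where
  toFun := fun o => o.elim 1 gac
  invFun := ![some 0, none, some 1]
  left_inv := by decide
  right_inv := by decide

lemma triple_indep {w : KField} (hw : Transcendental Sac w) :
    AlgebraicIndependent ℚ ![tv 0, w, tv 2] := by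
  have h := (pair_indep.option_iff_transcendental w).mpr hw
  refine (algebraicIndependent_equiv' (R := ℚ) e3 (f := ![tv 0, w, tv 2])
      (g := fun o => o.elim w (tv ∘ gac)) ?_).mp h
  funext o
  cases o with
  | none => rfl
  | some i => fin_cases i <;> rfl

lemma sv_indep : AlgebraicIndependent ℚ ![tv 0, yv, tv 2] := triple_indep yv_trans
lemma zz_indep : AlgebraicIndependent ℚ ![tv 0, zv, tv 2] := triple_indep zv_trans

def sigmaH : KField →+* KField :=
  IsFractionRing.lift (A := MvPolynomial (Fin 3) ℚ) (K := KField)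
    (g := ((MvPolynomial.aeval ![tv 0, yv, tv 2]).toRingHom : MvPolynomial (Fin 3) ℚ →+* KField))
    (by exact algebraicIndependent_iff_injective_aeval.mp sv_indep)

def tauH : KField →+* KField :=
  IsFractionRing.lift (A := MvPolynomial (Fin 3) ℚ) (K := KField)
    (g := ((MvPolynomial.aeval ![tv 0, zv, tv 2]).toRingHom : MvPolynomial (Fin 3) ℚ →+* KField))
    (by exact algebraicIndependent_iff_injective_aeval.mp zz_indep)

lemma sigma_tv (i : Fin 3) : sigmaH (tv i) = ![tv 0, yv, tv 2] i := by
  rw [tv, sigmaH, IsFractionRing.lift_algebraMap]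
  simp

lemma tau_tv (i : Fin 3) : tauH (tv i) = ![tv 0, zv, tv 2] i := by
  rw [tv, tauH, IsFractionRing.lift_algebraMap]
  simp

lemma sigma_tv0 : sigmaH (tv 0) = tv 0 := sigma_tv 0
lemma sigma_tv1 : sigmaH (tv 1) = yv := sigma_tv 1
lemma sigma_tv2 : sigmaH (tv 2) = tv 2 := sigma_tv 2
lemma tau_tv0 : tauH (tv 0) = tv 0 := tau_tv 0
lemma tau_tv1 : tauH (tv 1) = zv := tau_tv 1
lemma tau_tv2 : tauH (tv 2) = tv 2 := tau_tv 2

lemma ratCast_fix (f : KField →+* KField) (r : ℚ) :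
    f (algebraMap (MvPolynomial (Fin 3) ℚ) KField (C r)) =
      algebraMap (MvPolynomial (Fin 3) ℚ) KField (C r) := by
  have h : algebraMap (MvPolynomial (Fin 3) ℚ) KField (C r) = (r : KField) :=
    eq_ratCast ((algebraMap (MvPolynomial (Fin 3) ℚ) KField).comp (C : ℚ →+* _)) r
  rw [h, map_ratCast]

lemma comp_eq_id {f g : KField →+* KField} (h0 : f (tv 0) = tv 0) (h1 : g (f (tv 1)) = tv 1)
    (h2 : f (tv 2) = tv 2) (g0 : g (tv 0) = tv 0) (g2 : g (tv 2) = tv 2) :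
    g.comp f = RingHom.id KField := by
  apply IsLocalization.ringHom_ext (nonZeroDivisors (MvPolynomial (Fin 3) ℚ))
  apply MvPolynomial.ringHom_ext
  · intro r
    simp only [RingHom.comp_apply, RingHom.id_apply]
    rw [show (algebraMap (MvPolynomial (Fin 3) ℚ) (FractionRing (MvPolynomial (Fin 3) ℚ))) (C r)
        = algebraMap (MvPolynomial (Fin 3) ℚ) KField (C r) from rfl,
      ratCast_fix f, ratCast_fix g]
  · intro i
    simp only [RingHom.comp_apply, RingHom.id_apply]
    fin_cases i
    · show g (f (tv 0)) = tv 0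
      rw [h0, g0]
    · show g (f (tv 1)) = tv 1
      exact h1
    · show g (f (tv 2)) = tv 2
      rw [h2, g2]

lemma one_sub_zv : tv 0 - zv = (tv 0 - tv 2) / (1 - tv 1) := by
  have hb1 := ne_b1
  rw [zv]; field_simp; try ring

lemma tau_yv : tauH yv = tv 1 := by
  have hb1 := ne_b1; have hab := ne_ab; have hac := ne_ac
  rw [yv, map_div₀, map_sub, map_sub, tau_tv0, tau_tv1, tau_tv2]
  have hz0 : tv 0 - zv ≠ 0 := by rw [one_sub_zv]; exact div_ne_zero hac hb1
  rw [div_eq_iff hz0, zv]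
  field_simp
  try ring

lemma one_sub_yv : 1 - yv = (tv 0 - tv 2) / (tv 0 - tv 1) := by
  have hab := ne_ab
  rw [yv]; field_simp; try ring

lemma sigma_zv : sigmaH zv = tv 1 := by
  have hb1 := ne_b1; have hab := ne_ab; have hac := ne_ac
  rw [zv, map_div₀, map_sub, map_sub, map_one, map_mul, sigma_tv0, sigma_tv1, sigma_tv2]
  have hz0 : 1 - yv ≠ 0 := by rw [one_sub_yv]; exact div_ne_zero hac hab
  rw [div_eq_iff hz0, yv]
  field_simp
  try ring

lemma tau_sigma : tauH.comp sigmaH = RingHom.id KField :=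
  comp_eq_id sigma_tv0 (by rw [sigma_tv1]; exact tau_yv) sigma_tv2 tau_tv0 tau_tv2

lemma sigma_tau : sigmaH.comp tauH = RingHom.id KField :=
  comp_eq_id tau_tv0 (by rw [tau_tv1]; exact sigma_zv) tau_tv2 sigma_tv0 sigma_tv2

/-! ### Group membership -/

def GU (G : Subgroup KFieldˣ) (x : KField) : Prop :=
  ∃ u : KFieldˣ, u ∈ G ∧ (u : KField) = x

lemma GU.one {G : Subgroup KFieldˣ} : GU G 1 := ⟨1, G.one_mem, rfl⟩

lemma GU.mul {G : Subgroup KFieldˣ} {x y : KField} (hx : GU G x) (hy : GU G y) :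
    GU G (x * y) := by
  obtain ⟨u, hu, rfl⟩ := hx; obtain ⟨v, hv, rfl⟩ := hy
  exact ⟨u * v, mul_mem hu hv, rfl⟩

lemma GU.inv {G : Subgroup KFieldˣ} {x : KField} (hx : GU G x) : GU G x⁻¹ := by
  obtain ⟨u, hu, rfl⟩ := hx
  exact ⟨u⁻¹, inv_mem hu, Units.val_inv_eq_inv_val u⟩

lemma GU.div {G : Subgroup KFieldˣ} {x y : KField} (hx : GU G x) (hy : GU G y) :
    GU G (x / y) := by
  rw [div_eq_mul_inv]; exact hx.mul hy.inv

lemma GU_gen {S : Set KField} {x : KField} (hS : x ∈ S) (h0 : x ≠ 0) :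
    GU (pfGroup S) x :=
  ⟨Units.mk0 x h0, Subgroup.subset_closure (by simpa using hS), rfl⟩

lemma GU.neg {S : Set KField} (hS : (-1 : KField) ∈ S) {x : KField}
    (h : GU (pfGroup S) x) : GU (pfGroup S) (-x) := by
  have h1 : GU (pfGroup S) (-1 : KField) := GU_gen hS (by norm_num)
  simpa using h1.mul h

def U3S : Set KField :=
  {-1, tv 0, tv 1, tv 2, tv 0 - 1, tv 1 - 1, tv 2 - 1,
    tv 0 - tv 1, tv 0 - tv 2, tv 1 - tv 2}

def H5S : Set KField :=
  {-1, tv 0, tv 1, tv 2, 1 - tv 0, 1 - tv 1, 1 - tv 2,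
    tv 0 - tv 2, tv 2 - tv 0 * tv 1, 1 - tv 2 - (1 - tv 0) * tv 1}

lemma U3Group_eq : U3Group = pfGroup U3S := rfl
lemma H5Group_eq : H5Group = pfGroup H5S := rfl

lemma negOne_mem_U3S : (-1 : KField) ∈ U3S := by left; rfl
lemma negOne_mem_H5S : (-1 : KField) ∈ H5S := by left; rfl

lemma GU_neg_sub_U3 {x y : KField} (hS : x - y ∈ U3S) (h0 : x - y ≠ 0) :
    GU U3Group (y - x) := by
  have h := (GU_gen (S := U3S) hS h0).neg negOne_mem_U3S
  rw [neg_sub] at h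
  exact h

lemma sigma_gen : ∀ x ∈ H5S, GU U3Group (sigmaH x) := by
  have hab := ne_ab
  intro x hx
  simp only [H5S, Set.mem_insert_iff, Set.mem_singleton_iff] at hx
  rcases hx with rfl|rfl|rfl|rfl|rfl|rfl|rfl|rfl|rfl|rfl
  · rw [map_neg, map_one]
    exact (GU.one (G := pfGroup U3S)).neg negOne_mem_U3S
  · rw [sigma_tv0]
    exact GU_gen (by right; left; rfl) ne_a
  · rw [sigma_tv1, yv]
    exact (GU_neg_sub_U3 (by right;right;right;right;right;right;right;right;right; rfl) ne_bc).div
      (GU_gen (by right;right;right;right;right;right;right; left; rfl) ne_ab)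
  · rw [sigma_tv2]
    exact GU_gen (by right;right;right; left; rfl) ne_c
  · rw [map_sub, map_one, sigma_tv0]
    exact GU_neg_sub_U3 (by right;right;right;right; left; rfl) ne_a1
  · rw [map_sub, map_one, sigma_tv1, one_sub_yv]
    exact (GU_gen (by right;right;right;right;right;right;right;right; left; rfl) ne_ac).div
      (GU_gen (by right;right;right;right;right;right;right; left; rfl) ne_ab)
  · rw [map_sub, map_one, sigma_tv2]
    exact GU_neg_sub_U3 (by right;right;right;right;right;right; left; rfl) ne_c1
  · rw [map_sub, sigma_tv0, sigma_tv2]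
    exact GU_gen (by right;right;right;right;right;right;right;right; left; rfl) ne_ac
  · rw [map_sub, map_mul, sigma_tv0, sigma_tv1, sigma_tv2]
    have he : tv 2 - tv 0 * yv = tv 1 * (tv 0 - tv 2) / (tv 0 - tv 1) := by
      rw [yv]; field_simp; try ring
    rw [he]
    exact ((GU_gen (S := U3S) (by right;right; left; rfl) ne_b).mul
        (GU_gen (by right;right;right;right;right;right;right;right; left; rfl) ne_ac)).div
      (GU_gen (by right;right;right;right;right;right;right; left; rfl) ne_ab)
  · simp only [map_sub, map_mul, map_one, sigma_tv0, sigma_tv1, sigma_tv2]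
    have he : 1 - tv 2 - (1 - tv 0) * yv = (1 - tv 1) * (tv 0 - tv 2) / (tv 0 - tv 1) := by
      rw [yv]; field_simp; try ring
    rw [he]
    exact ((GU_neg_sub_U3 (by right;right;right;right;right; left; rfl) ne_b1').mul
        (GU_gen (by right;right;right;right;right;right;right;right; left; rfl) ne_ac)).div
      (GU_gen (by right;right;right;right;right;right;right; left; rfl) ne_ab)

lemma GU_neg_sub_H5 {x y : KField} (hS : x - y ∈ H5S) (h0 : x - y ≠ 0) :
    GU H5Group (y - x) := by
  have h := (GU_gen (S := H5S) hS h0).neg negOne_mem_H5S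
  rw [neg_sub] at h
  exact h

lemma tau_gen : ∀ x ∈ U3S, GU H5Group (tauH x) := by
  have hb1 := ne_b1
  intro x hx
  simp only [U3S, Set.mem_insert_iff, Set.mem_singleton_iff] at hx
  rcases hx with rfl|rfl|rfl|rfl|rfl|rfl|rfl|rfl|rfl|rfl
  · rw [map_neg, map_one]
    exact (GU.one (G := pfGroup H5S)).neg negOne_mem_H5S
  · rw [tau_tv0]
    exact GU_gen (by right; left; rfl) ne_a
  · rw [tau_tv1, zv]
    exact (GU_gen (S := H5S) (by right;right;right;right;right;right;right;right; left; rfl)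
        ne_cab).div
      (GU_gen (by right;right;right;right;right; left; rfl) ne_b1)
  · rw [tau_tv2]
    exact GU_gen (by right;right;right; left; rfl) ne_c
  · rw [map_sub, map_one, tau_tv0]
    exact GU_neg_sub_H5 (by right;right;right;right; left; rfl) ne_1a
  · rw [map_sub, map_one, tau_tv1]
    have he : zv - 1 = -((1 - tv 2 - (1 - tv 0) * tv 1) / (1 - tv 1)) := by
      rw [zv]; field_simp; try ring
    rw [he]
    exact (((GU_gen (S := H5S)
        (by right;right;right;right;right;right;right;right;right; rfl) ne_g10).div
      (GU_gen (by right;right;right;right;right; left; rfl) ne_b1)).neg negOne_mem_H5S)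
  · rw [map_sub, map_one, tau_tv2]
    exact GU_neg_sub_H5 (by right;right;right;right;right;right; left; rfl) ne_1c
  · rw [map_sub, tau_tv0, tau_tv1, one_sub_zv]
    exact (GU_gen (S := H5S) (by right;right;right;right;right;right;right; left; rfl) ne_ac).div
      (GU_gen (by right;right;right;right;right; left; rfl) ne_b1)
  · rw [map_sub, tau_tv0, tau_tv2]
    exact GU_gen (by right;right;right;right;right;right;right; left; rfl) ne_ac
  · rw [map_sub, tau_tv1, tau_tv2]
    have he : zv - tv 2 = -(tv 1 * (tv 0 - tv 2) / (1 - tv 1)) := by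
      rw [zv]; field_simp; try ring
    rw [he]
    exact (((GU_gen (S := H5S) (by right;right; left; rfl) ne_b).mul
        (GU_gen (by right;right;right;right;right;right;right; left; rfl) ne_ac)).div
      (GU_gen (by right;right;right;right;right; left; rfl) ne_b1)).neg negOne_mem_H5S

lemma sigma_GU {u : KFieldˣ} (hu : u ∈ H5Group) : GU U3Group (sigmaH ↑u) := by
  induction hu using Subgroup.closure_induction with
  | mem x hx => exact sigma_gen ↑x hx
  | one =>
    rw [Units.val_one, map_one]; exact GU.one
  | mul x y hx hy ihx ihy =>
    rw [Units.val_mul, map_mul]; exact ihx.mul ihy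
  | inv x hx ih =>
    rw [Units.val_inv_eq_inv_val, map_inv₀]; exact ih.inv

lemma tau_GU {u : KFieldˣ} (hu : u ∈ U3Group) : GU H5Group (tauH ↑u) := by
  induction hu using Subgroup.closure_induction with
  | mem x hx => exact tau_gen ↑x hx
  | one =>
    rw [Units.val_one, map_one]; exact GU.one
  | mul x y hx hy ihx ihy =>
    rw [Units.val_mul, map_mul]; exact ihx.mul ihy
  | inv x hx ih =>
    rw [Units.val_inv_eq_inv_val, map_inv₀]; exact ih.inv

lemma sigma_mem : ∀ x ∈ PFMembers H5Group, sigmaH x ∈ PFMembers U3Group := by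
  rintro x (rfl | ⟨u, hu, rfl⟩)
  · rw [map_zero]; exact Set.mem_insert 0 _
  · exact Set.mem_insert_iff.mpr (Or.inr (sigma_GU hu))

lemma tau_mem : ∀ x ∈ PFMembers U3Group, tauH x ∈ PFMembers H5Group := by
  rintro x (rfl | ⟨u, hu, rfl⟩)
  · rw [map_zero]; exact Set.mem_insert 0 _
  · exact Set.mem_insert_iff.mpr (Or.inr (tau_GU hu))

/-! ### Representability transfer -/

lemma subdetNonzero_map {γ : Type*} [DecidableEq γ] (f : KField →+* KField)
    (A : γ → γ → KField) (P Q : Finset γ) :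
    SubdetNonzero (fun i j => f (A i j)) P Q ↔ SubdetNonzero A P Q := by
  have hinj : Function.Injective f := f.injective
  unfold SubdetNonzero
  refine forall_congr' fun n => forall_congr' fun ep => forall_congr' fun eq => ?_
  have h : (Matrix.of fun i j => f (A ((ep.symm i) : {x // x ∈ P}).1 ((eq.symm j) : {x // x ∈ Q}).1))
      = f.mapMatrix (Matrix.of fun i j =>
          A ((ep.symm i) : {x // x ∈ P}).1 ((eq.symm j) : {x // x ∈ Q}).1) := rfl
  rw [h, ← RingHom.map_det]
  constructor
  · intro hne h0; exact hne (by rw [h0, map_zero])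
  · intro hne hc; exact hne (hinj (by rw [hc, map_zero]))

lemma repOver_transfer {γ : Type*} [DecidableEq γ] (M : Matroid γ)
    {G G' : Subgroup KFieldˣ} (f : KField →+* KField)
    (hf : ∀ x ∈ PFMembers G, f x ∈ PFMembers G') :
    RepOver M G → RepOver M G' := by
  rintro ⟨X, Y, A, hd, hu, hs, hb⟩
  refine ⟨X, Y, fun i j => f (A i j), hd, hu, ?_, ?_⟩
  · intro P Q hP hQ n ep eq
    have h : (Matrix.of fun i j =>
          f (A ((ep.symm i) : {x // x ∈ P}).1 ((eq.symm j) : {x // x ∈ Q}).1))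
        = f.mapMatrix (Matrix.of fun i j =>
            A ((ep.symm i) : {x // x ∈ P}).1 ((eq.symm j) : {x // x ∈ Q}).1) := rfl
    rw [h, ← RingHom.map_det]
    exact hf _ (hs P Q hP hQ n ep eq)
  · intro B
    rw [hb B]
    refine or_congr Iff.rfl (exists_congr fun Z => ?_)
    refine and_congr Iff.rfl (and_congr Iff.rfl (and_congr Iff.rfl ?_))
    exact (subdetNonzero_map f A (X ∩ Z) (Y ∩ Z)).symm

end

end Stmt15Aux

/-- The partial fields `H₅` (Hydra-5) and `U₃` (3-regular) are
isomorphic; in particular, a matroid is representable over `U₃` iff it is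
representable over `H₅`. -/
theorem stmt15 :
    PFIsoP H5Group U3Group ∧
      ∀ (α : Type u) [DecidableEq α] (M : Matroid α),
        (RepOver M U3Group ↔ RepOver M H5Group) := by
  constructor
  · refine ⟨⟨sigmaH, sigma_mem, map_one sigmaH, fun p _ q _ => map_mul sigmaH p q,
      fun p _ q _ _ => map_add sigmaH p q⟩,
      ⟨tauH, tau_mem, map_one tauH, fun p _ q _ => map_mul tauH p q,
      fun p _ q _ _ => map_add tauH p q⟩, ?_, ?_⟩
    · intro x _
      simpa using RingHom.congr_fun tau_sigma x
    · intro y _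
      simpa using RingHom.congr_fun sigma_tau y
  · intro γ _ M
    exact ⟨repOver_transfer M tauH tau_mem, repOver_transfer M sigmaH sigma_mem⟩

end PaperFormal
end
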